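/- For the ring of cliques R_{b,q} with b ≥ 3 and q ≥ 4 even, taking k = q/2 (so α_{q/2} = −2 and c^{q/2,q}_j = (−1)^j), the vectors c^{q/2,q} ⊗ (ξ₁^{(q/2)} e₁ + g₁) and c^{q/2,q} ⊗ (ξ₂^{(q/2)} e₁ + g₁) are nonzero and satisfy Â(c^{q/2,q} ⊗ (ξ_i^{(q/2)} e₁ + g₁)) = λ_i^{(q/2)} · (c^{q/2,q} ⊗ (ξ_i^{(q/2)} e₁ + g₁)) for i = 1, 2. -/

import Mathlib

open Matrix Finset

/-- Adjacency matrix of the ring of cliques `R_{b,q}`: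
`A = I_q ⊗ (1_b 1_bᵀ − I_b) + C_q ⊗ e₁e₁ᵀ`, written entrywise.  Vertices are pairs
`(i, a)` where `i : Fin q` is the block and `a : Fin b` the position within the block;
`a = 0` is the corner vertex of the block. -/
noncomputable def rocAdj (b q : ℕ) : Matrix (Fin q × Fin b) (Fin q × Fin b) ℝ :=
  Matrix.of fun p r =>
    (if p.1 = r.1 ∧ p.2 ≠ r.2 then (1 : ℝ) else 0) +
    (if ((p.1.val + 1) % q = r.1.val ∨ (r.1.val + 1) % q = p.1.val) ∧
        p.2.val = 0 ∧ r.2.val = 0 then (1 : ℝ) else 0)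

/-- Degrees in `R_{b,q}`: the corner of each block has degree `b+1`, internal
vertices have degree `b−1`. -/
noncomputable def rocDeg (b q : ℕ) (p : Fin q × Fin b) : ℝ :=
  if p.2.val = 0 then (b : ℝ) + 1 else (b : ℝ) - 1

/-- Normalized adjacency matrix `Â = D^{−1/2} A D^{−1/2}` of `R_{b,q}`. -/
noncomputable def rocAhat (b q : ℕ) : Matrix (Fin q × Fin b) (Fin q × Fin b) ℝ :=
  Matrix.diagonal (fun p => 1 / Real.sqrt (rocDeg b q p)) * rocAdj b q *
    Matrix.diagonal (fun p => 1 / Real.sqrt (rocDeg b q p))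

/-- `α_k = 2 cos(2πk/q)`. -/
noncomputable def rocAlpha (q k : ℕ) : ℝ := 2 * Real.cos (2 * Real.pi * k / q)

/-- `β_k = (1/2)(α_k √((b−1)/(b+1)) − √(b²−1) + √((b+1)/(b−1)))`. -/
noncomputable def rocBeta (b q k : ℕ) : ℝ :=
  (1 / 2) * (rocAlpha q k * Real.sqrt (((b : ℝ) - 1) / ((b : ℝ) + 1)) -
    Real.sqrt ((b : ℝ) ^ 2 - 1) + Real.sqrt (((b : ℝ) + 1) / ((b : ℝ) - 1)))

/-- `ξ₁⁽ᵏ⁾ = β_k + √(β_k² + (b−1))`. -/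
noncomputable def rocXi1 (b q k : ℕ) : ℝ :=
  rocBeta b q k + Real.sqrt ((rocBeta b q k) ^ 2 + ((b : ℝ) - 1))

/-- `ξ₂⁽ᵏ⁾ = β_k − √(β_k² + (b−1))`. -/
noncomputable def rocXi2 (b q k : ℕ) : ℝ :=
  rocBeta b q k - Real.sqrt ((rocBeta b q k) ^ 2 + ((b : ℝ) - 1))

/-- `λ₁⁽ᵏ⁾ = ξ₁⁽ᵏ⁾/√(b²−1) + 1 − 1/(b−1)`. -/
noncomputable def rocLam1 (b q k : ℕ) : ℝ :=
  rocXi1 b q k / Real.sqrt ((b : ℝ) ^ 2 - 1) + 1 - 1 / ((b : ℝ) - 1)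

/-- `λ₂⁽ᵏ⁾ = ξ₂⁽ᵏ⁾/√(b²−1) + 1 − 1/(b−1)`. -/
noncomputable def rocLam2 (b q k : ℕ) : ℝ :=
  rocXi2 b q k / Real.sqrt ((b : ℝ) ^ 2 - 1) + 1 - 1 / ((b : ℝ) - 1)

/-- Periodic cosine vector `c^{k,q}_j = cos(2πkj/q)`, `j = 1, …, q`;
for `k = q/2` (with `q` even) this is `c_j = (−1)^j`. -/
noncomputable def cvec (q k : ℕ) : Fin q → ℝ :=
  fun j => Real.cos (2 * Real.pi * k * (j.val + 1) / q)

/-- Block vector `ξ e₁ + g₁ ∈ ℝ^b`. -/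
noncomputable def blockVec (b : ℕ) (ξ : ℝ) : Fin b → ℝ :=
  fun a => if a.val = 0 then ξ else 1

/-- Kronecker (tensor) product of vectors: `(y ⊗ z)_{(i,a)} = y_i z_a`. -/
noncomputable def vkron {q b : ℕ} (y : Fin q → ℝ) (z : Fin b → ℝ) : Fin q × Fin b → ℝ :=
  fun p => y p.1 * z p.2


/-!
On a vector `y ⊗ z` the clique edges of `R_{b,q}` act inside each block, giving
`y_i (∑ z − z_a)`, while the cycle edges join only corners and contribute
`(y_{i+1} + y_{i-1}) z_1`, which is `α_k y_i z_1` for the cosine vector `y = c^{k,q}`.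
So after the degree scaling `Â` maps `c^{k,q} ⊗ (ξ e₁ + g₁)` to `c^{k,q} ⊗ (u e₁ + v g₁)`
for some `u, v`. Comparing interior entries forces `λ = ξ/√(b²−1) + 1 − 1/(b−1)`, and with
this `λ` the corner entries agree exactly when `ξ² = 2 β_k ξ + (b − 1)`, the quadratic
whose roots are `ξ₁⁽ᵏ⁾, ξ₂⁽ᵏ⁾`.
-/

namespace Fin

variable {n : ℕ} [NeZero n]

theorem val_add_one_eq_mod (i : Fin n) : (i + 1).val = (i.val + 1) % n := by
  rw [Fin.val_add, Fin.val_one', Nat.add_mod_mod]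

theorem val_add_one_mod_eq_iff (i j : Fin n) : (i.val + 1) % n = j.val ↔ j = i + 1 := by
  rw [← val_add_one_eq_mod, Fin.val_inj, eq_comm]

theorem add_one_ne_sub_one (hn : 3 ≤ n) (i : Fin n) : i + 1 ≠ i - 1 := by
  intro h
  rw [sub_eq_add_neg] at h
  have h2 : (1 : Fin n) + 1 = 0 := eq_neg_iff_add_eq_zero.mp (add_left_cancel h)
  have hval := congrArg Fin.val h2
  rw [Fin.val_add, Fin.val_one', Nat.mod_eq_of_lt (by omega : 1 < n),
    Nat.mod_eq_of_lt (by omega : 1 + 1 < n)] at hval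
  simp at hval

end Fin

open Real

theorem cos_two_pi_mul_div_mod (k n q : ℕ) (hq : q ≠ 0) :
    cos (2 * π * k * n / q) = cos (2 * π * k * (n % q : ℕ) / q) := by
  have hq' : (q : ℝ) ≠ 0 := Nat.cast_ne_zero.mpr hq
  have hsplit : 2 * π * k * n / q =
      2 * π * k * (n % q : ℕ) / q + (k * (n / q) : ℕ) * (2 * π) := by
    conv_lhs => rw [← Nat.mod_add_div n q]
    push_cast
    field_simp
  rw [hsplit, cos_add_nat_mul_two_pi]

theorem sum_fin_ite_val_eq_zero {b : ℕ} (hb : b ≠ 0) (u v : ℝ) :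
    ∑ a : Fin b, (if a.val = 0 then u else v) = u + ((b : ℝ) - 1) * v := by
  obtain ⟨m, rfl⟩ := Nat.exists_eq_succ_of_ne_zero hb
  simp [Fin.sum_univ_succ]

section RingOfCliques

variable {b q : ℕ}

theorem rocAdj_cycle_iff [NeZero q] (i j : Fin q) :
    ((i.val + 1) % q = j.val ∨ (j.val + 1) % q = i.val) ↔
      j ∈ ({i + 1, i - 1} : Finset (Fin q)) := by
  rw [Fin.val_add_one_mod_eq_iff, Fin.val_add_one_mod_eq_iff, @eq_comm _ i,
    ← eq_sub_iff_add_eq]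
  simp

theorem rocAdj_mulVec_vkron [NeZero q] (hq : 3 ≤ q) (y : Fin q → ℝ) (w : Fin b → ℝ)
    (i : Fin q) (a : Fin b) :
    (rocAdj b q *ᵥ vkron y w) (i, a) =
      y i * (∑ c, w c - w a) + if a.val = 0 then (y (i + 1) + y (i - 1)) * w a else 0 := by
  simp only [mulVec, dotProduct, Fintype.sum_prod_type, rocAdj, of_apply, vkron, add_mul,
    sum_add_distrib]
  congr 1
  · have hclique : ∀ c, (if a ≠ c then (1 : ℝ) else 0) = 1 - if a = c then 1 else 0 := by
      intro c; split_ifs <;> simp_all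
    simp [ite_and, hclique, sub_mul, sum_sub_distrib, mul_sub, mul_sum]
  · split_ifs with ha
    · have hcorner : ∀ c : Fin b, c.val = 0 ↔ c = a := fun c => by rw [Fin.ext_iff, ha]
      simp only [ha, hcorner, rocAdj_cycle_iff, ite_and, ite_mul, one_mul, zero_mul, true_and,
        sum_ite_irrel, sum_ite_eq', mem_univ, if_true, sum_const_zero, sum_ite_mem, univ_inter,
        sum_pair (Fin.add_one_ne_sub_one hq i)]
    · simp [ha]

theorem cvec_eq_cos_of_mod_eq [NeZero q] (k : ℕ) (j : Fin q) (m : ℕ)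
    (h : (j.val + 1) % q = m % q) : cvec q k j = cos (2 * π * k * m / q) := by
  rw [cos_two_pi_mul_div_mod k m q (NeZero.ne q), ← h,
    ← cos_two_pi_mul_div_mod k _ q (NeZero.ne q), cvec]
  push_cast
  ring_nf

theorem cvec_add_one_add_cvec_sub_one [NeZero q] (k : ℕ) (i : Fin q) :
    cvec q k (i + 1) + cvec q k (i - 1) = rocAlpha q k * cvec q k i := by
  have hnext : cvec q k (i + 1) = cos (2 * π * k * (i.val + 1) / q + 2 * π * k / q) := by
    rw [cvec_eq_cos_of_mod_eq k _ (i.val + 2)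
      (by rw [Fin.val_add_one_eq_mod, Nat.mod_add_mod])]
    push_cast
    ring_nf
  have hprev : cvec q k (i - 1) = cos (2 * π * k * (i.val + 1) / q - 2 * π * k / q) := by
    rw [cvec_eq_cos_of_mod_eq k _ i.val (by
      rw [← Fin.val_add_one_eq_mod, sub_add_cancel, Nat.mod_eq_of_lt i.isLt])]
    ring_nf
  rw [hnext, hprev, cos_add, cos_sub, rocAlpha, cvec]
  ring

theorem cvec_half (hq : Even q) (j : Fin q) : cvec q (q / 2) j = (-1 : ℝ) ^ (j.val + 1) := by
  obtain ⟨m, rfl⟩ := hq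
  have hm : (m : ℝ) ≠ 0 := Nat.cast_ne_zero.mpr (by have := j.isLt; omega)
  rw [cvec, show (m + m) / 2 = m by omega, ← cos_nat_mul_pi]
  congr 1
  push_cast
  field_simp
  ring

theorem rocAlpha_half (hq : Even q) (hq0 : q ≠ 0) : rocAlpha q (q / 2) = -2 := by
  obtain ⟨m, rfl⟩ := hq
  have hm : (m : ℝ) ≠ 0 := Nat.cast_ne_zero.mpr (by omega)
  rw [rocAlpha, show (m + m) / 2 = m by omega, show 2 * π * m / ((m + m : ℕ) : ℝ) = π by
    push_cast; field_simp; ring, cos_pi]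
  ring

theorem vkron_cvec_blockVec_ne_zero [NeZero q] (hb : 2 ≤ b) (k : ℕ) (ξ : ℝ) :
    vkron (cvec q k) (blockVec b ξ) ≠ 0 := by
  intro h
  have hlast := congrFun h (⟨q - 1, Nat.sub_one_lt (NeZero.ne q)⟩, ⟨1, by omega⟩)
  rw [vkron, cvec_eq_cos_of_mod_eq k _ 0 (by
    simp [Nat.sub_add_cancel (NeZero.one_le : 1 ≤ q)])] at hlast
  simp [blockVec] at hlast

theorem diagonal_mulVec_vkron_blockVec (y : Fin q → ℝ) (ξ : ℝ) :
    diagonal (fun p => 1 / √(rocDeg b q p)) *ᵥ vkron y (blockVec b ξ) =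
      vkron y (fun a => if a.val = 0 then ξ / √((b : ℝ) + 1) else 1 / √((b : ℝ) - 1)) := by
  ext ⟨i, a⟩
  rw [mulVec_diagonal]
  simp only [vkron, blockVec, rocDeg]
  split_ifs <;> ring

theorem rocAhat_mulVec_vkron_cvec_blockVec_apply (hq : 3 ≤ q) (k : ℕ) (ξ : ℝ) (i : Fin q)
    (a : Fin b) :
    (rocAhat b q *ᵥ vkron (cvec q k) (blockVec b ξ)) (i, a) = cvec q k i *
      if a.val = 0 then
        ((b - 1) / √((b : ℝ) - 1) + rocAlpha q k * ξ / √((b : ℝ) + 1)) / √((b : ℝ) + 1)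
      else (ξ / √((b : ℝ) + 1) + (b - 2) / √((b : ℝ) - 1)) / √((b : ℝ) - 1) := by
  have : NeZero q := ⟨by omega⟩
  rw [rocAhat, ← mulVec_mulVec, ← mulVec_mulVec, diagonal_mulVec_vkron_blockVec,
    mulVec_diagonal, rocAdj_mulVec_vkron hq, cvec_add_one_add_cvec_sub_one,
    sum_fin_ite_val_eq_zero a.pos.ne']
  simp only [rocDeg]
  split_ifs <;> ring

theorem two_mul_rocBeta (hb : 2 ≤ b) (q k : ℕ) :
    2 * rocBeta b q k = rocAlpha q k * √((b : ℝ) - 1) / √((b : ℝ) + 1)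
      - ((b : ℝ) - 2) * √((b : ℝ) + 1) / √((b : ℝ) - 1) := by
  have hb' : (2 : ℝ) ≤ b := by exact_mod_cast hb
  have hs : 0 < √((b : ℝ) - 1) := sqrt_pos.mpr (by linarith)
  have hs2 : √((b : ℝ) - 1) ^ 2 = b - 1 := sq_sqrt (by linarith)
  rw [rocBeta, sqrt_div (by linarith), sqrt_div (by linarith),
    show (b : ℝ) ^ 2 - 1 = (b - 1) * (b + 1) by ring, sqrt_mul (by linarith)]
  field_simp
  linear_combination (-√((b : ℝ) + 1) ^ 2) * hs2

theorem rocAhat_mulVec_vkron_cvec_blockVec (hb : 2 ≤ b) (hq : 3 ≤ q) (k : ℕ) (ξ : ℝ)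
    (hξ : ξ ^ 2 = 2 * rocBeta b q k * ξ + ((b : ℝ) - 1)) :
    rocAhat b q *ᵥ vkron (cvec q k) (blockVec b ξ) =
      (ξ / √((b : ℝ) ^ 2 - 1) + 1 - 1 / ((b : ℝ) - 1)) • vkron (cvec q k) (blockVec b ξ) := by
  have hb' : (2 : ℝ) ≤ b := by exact_mod_cast hb
  have hb1 : (b : ℝ) - 1 ≠ 0 := by linarith
  rw [two_mul_rocBeta hb] at hξ
  set s := √((b : ℝ) - 1)
  set t := √((b : ℝ) + 1)
  have hs : 0 < s := sqrt_pos.mpr (by linarith)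
  have ht : 0 < t := sqrt_pos.mpr (by linarith)
  have hs2 : s ^ 2 = b - 1 := sq_sqrt (by linarith)
  have hst : √((b : ℝ) ^ 2 - 1) = s * t := by
    rw [show (b : ℝ) ^ 2 - 1 = (b - 1) * (b + 1) by ring, sqrt_mul (by linarith)]
  have hquad :
      ξ ^ 2 * s * t = ξ * (rocAlpha q k * s ^ 2 - t ^ 2 * (b - 2)) + (b - 1) * s * t := by
    field_simp at hξ
    linear_combination hξ
  have hcorner :
      ((b - 1) / s + rocAlpha q k * ξ / t) / t = (ξ / (s * t) + 1 - 1 / (b - 1)) * ξ := by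
    field_simp
    linear_combination (-s) * hquad + (ξ ^ 2 * t - (b - 1) * t - s * rocAlpha q k * ξ) * hs2
  have hinterior : (ξ / t + (b - 2) / s) / s = ξ / (s * t) + 1 - 1 / (b - 1) := by
    field_simp
    linear_combination (-(t * (b - 2))) * hs2
  ext ⟨i, a⟩
  rw [rocAhat_mulVec_vkron_cvec_blockVec_apply hq, Pi.smul_apply, smul_eq_mul, hst]
  simp only [vkron, blockVec]
  split_ifs
  · rw [hcorner]; ring
  · rw [hinterior]; ring

theorem rocXi1_sq (hb : 1 ≤ b) (q k : ℕ) :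
    rocXi1 b q k ^ 2 = 2 * rocBeta b q k * rocXi1 b q k + ((b : ℝ) - 1) := by
  have hb' : (1 : ℝ) ≤ b := by exact_mod_cast hb
  have hroot := sq_sqrt (add_nonneg (sq_nonneg (rocBeta b q k)) (by linarith : 0 ≤ (b : ℝ) - 1))
  rw [rocXi1]
  linear_combination hroot

theorem rocXi2_sq (hb : 1 ≤ b) (q k : ℕ) :
    rocXi2 b q k ^ 2 = 2 * rocBeta b q k * rocXi2 b q k + ((b : ℝ) - 1) := by
  have hb' : (1 : ℝ) ≤ b := by exact_mod_cast hb
  have hroot := sq_sqrt (add_nonneg (sq_nonneg (rocBeta b q k)) (by linarith : 0 ≤ (b : ℝ) - 1))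
  rw [rocXi2]
  linear_combination hroot

theorem rocAhat_mulVec_vkron_rocXi1 (hb : 2 ≤ b) (hq : 3 ≤ q) (k : ℕ) :
    rocAhat b q *ᵥ vkron (cvec q k) (blockVec b (rocXi1 b q k)) =
      rocLam1 b q k • vkron (cvec q k) (blockVec b (rocXi1 b q k)) :=
  rocAhat_mulVec_vkron_cvec_blockVec hb hq k _ (rocXi1_sq (by omega) q k)

theorem rocAhat_mulVec_vkron_rocXi2 (hb : 2 ≤ b) (hq : 3 ≤ q) (k : ℕ) :
    rocAhat b q *ᵥ vkron (cvec q k) (blockVec b (rocXi2 b q k)) =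
      rocLam2 b q k • vkron (cvec q k) (blockVec b (rocXi2 b q k)) :=
  rocAhat_mulVec_vkron_cvec_blockVec hb hq k _ (rocXi2_sq (by omega) q k)

end RingOfCliques

/-- For `q` even and `k = q/2` (so `α_{q/2} = −2` and
`c^{q/2,q}_j = (−1)^j`), the vectors `c^{q/2,q} ⊗ (ξᵢ^{(q/2)}e₁ + g₁)` (`i = 1,2`)
are nonzero eigenvectors of `Â` for the eigenvalues `λᵢ^{(q/2)}`. -/
theorem roc_most_oscillatory_eigenpairs (b q : ℕ) (hb : 3 ≤ b) (hq : 4 ≤ q)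
    (hqeven : Even q) :
    (vkron (cvec q (q / 2)) (blockVec b (rocXi1 b q (q / 2))) ≠ 0 ∧
     vkron (cvec q (q / 2)) (blockVec b (rocXi2 b q (q / 2))) ≠ 0) ∧
    (∀ j : Fin q, cvec q (q / 2) j = (-1 : ℝ) ^ (j.val + 1)) ∧
    rocAlpha q (q / 2) = -2 ∧
    (rocAhat b q).mulVec (vkron (cvec q (q / 2)) (blockVec b (rocXi1 b q (q / 2)))) =
      rocLam1 b q (q / 2) • vkron (cvec q (q / 2)) (blockVec b (rocXi1 b q (q / 2))) ∧
    (rocAhat b q).mulVec (vkron (cvec q (q / 2)) (blockVec b (rocXi2 b q (q / 2)))) =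
      rocLam2 b q (q / 2) • vkron (cvec q (q / 2)) (blockVec b (rocXi2 b q (q / 2))) := by
  have : NeZero q := ⟨by omega⟩
  exact ⟨⟨vkron_cvec_blockVec_ne_zero (by omega) _ _,
      vkron_cvec_blockVec_ne_zero (by omega) _ _⟩,
    cvec_half hqeven, rocAlpha_half hqeven (by omega),
    rocAhat_mulVec_vkron_rocXi1 (by omega) (by omega) _,
    rocAhat_mulVec_vkron_rocXi2 (by omega) (by omega) _⟩
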